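/- Assume |N(μ)| < K and m > 1, μ ∈ F_m. For every feasible local search strategy η of the Graves-Lai program (i.e., η_j = 0 for j ∉ N(μ)), and for every mode k ∈ M(μ) \ {k*(μ)}, we have η_k ≥ 1/d_k(μ_k, μ_k − δ_k), where δ_k = min_{ℓ: (k,ℓ)∈E} |μ_k − μ_ℓ|. Consequently C_loc(m,μ) ≥ Σ_{k ∈ M(μ)\{k*(μ)}} Δ_k/d_k(μ_k, μ_k − δ_k). -/

import Mathlib

def IsMode {K : ℕ} (G : SimpleGraph (Fin K)) (lam : Fin K → ℝ) (k : Fin K) : Prop :=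
  ∀ l, G.Adj k l → lam l < lam k

def AtMostModal {K : ℕ} (G : SimpleGraph (Fin K)) (m : ℕ) : Set (Fin K → ℝ) :=
  {lam | {k | IsMode G lam k}.ncard ≤ m}

def ModeNeighborhood {K : ℕ} (G : SimpleGraph (Fin K)) (mu : Fin K → ℝ) : Set (Fin K) :=
  {j | IsMode G mu j ∨ ∃ i, IsMode G mu i ∧ G.Adj i j}

def ConfusingSet {K : ℕ} (G : SimpleGraph (Fin K)) (m : ℕ) (mu : Fin K → ℝ)
    (kstar : Fin K) : Set (Fin K → ℝ) :=
  {lam | lam ∈ AtMostModal G m ∧ lam kstar = mu kstar ∧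
    ∃ j, j ≠ kstar ∧ ∀ i, i ≠ j → lam i < lam j}

/-!
Pick an arm `j₀` outside `N(μ)`, which a local strategy never samples. Raising
`μ_{j₀}` above `μ*` and lowering a suboptimal mode `k` to the value of its closest neighbour
gives a confusing parameter with at most `m` modes: `j₀` gains a mode while `k` loses one.
It differs from `μ` only at `j₀` and `k`, so feasibility reads `η_k d_k(μ_k, μ_k - δ_k) ≥ 1`.

For the bound on `C_loc` the infimum must be over a non-empty set, as `sInf ∅ = 0`.
Let `ρ > 0` be below half of every gap between a mode and its neighbours and below every
gap `μ* - μ_j`. A confusing parameter `λ` moves some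
arm of `N(μ)` by at least `ρ`: otherwise every mode of `μ` stays a mode of `λ`, and the new
maximiser of `λ`, which lies outside `N(μ)`, is an `(m+1)`-st one. Hence weights
`1 / min (d_j(μ_j, μ_j - ρ), d_j(μ_j, μ_j + ρ))` on `N(μ)` form a feasible local strategy.
-/

open Function Set

def IsFeasibleLocalStrategy {K : ℕ} (G : SimpleGraph (Fin K)) (m : ℕ) (mu : Fin K → ℝ)
    (kstar : Fin K) (d : Fin K → ℝ → ℝ → ℝ) (η : Fin K → ℝ) : Prop :=
  (∀ j, 0 ≤ η j) ∧ (∀ lam ∈ ConfusingSet G m mu kstar, 1 ≤ ∑ j, η j * d j (mu j) (lam j)) ∧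
    ∀ j, j ∉ ModeNeighborhood G mu → η j = 0

section Divergence

variable {f : ℝ → ℝ} {x y ρ : ℝ}

lemma pos_of_strictAntiOn_strictMonoOn (h0 : f x = 0) (hanti : StrictAntiOn f (Iic x))
    (hmono : StrictMonoOn f (Ici x)) (hy : y ≠ x) : 0 < f y := by
  rw [← h0]
  rcases hy.lt_or_gt with hy | hy
  · exact hanti hy.le (mem_Iic.2 le_rfl) hy
  · exact hmono (mem_Ici.2 le_rfl) hy.le hy

lemma min_le_of_le_abs_sub (hanti : StrictAntiOn f (Iic x)) (hmono : StrictMonoOn f (Ici x))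
    (hρ : 0 ≤ ρ) (hy : ρ ≤ |y - x|) : min (f (x - ρ)) (f (x + ρ)) ≤ f y := by
  rcases le_abs.mp hy with hy | hy
  · exact (min_le_right _ _).trans <|
      hmono.monotoneOn (by simpa using hρ) (by simp; linarith) (by linarith)
  · exact (min_le_left _ _).trans <|
      hanti.antitoneOn (by simp; linarith) (by simpa using hρ) (by linarith)

end Divergence

lemma sum_div_le_sum_mul_of_one_div_le {ι : Type*} [Fintype ι] (s : Finset ι) {a b η : ι → ℝ}
    (ha : ∀ i, 0 ≤ a i) (hη : ∀ i, 0 ≤ η i) (h : ∀ i ∈ s, 1 / b i ≤ η i) :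
    ∑ i ∈ s, a i / b i ≤ ∑ i, η i * a i :=
  calc ∑ i ∈ s, a i / b i = ∑ i ∈ s, 1 / b i * a i := by simp only [one_div_mul_eq_div]
    _ ≤ ∑ i ∈ s, η i * a i := Finset.sum_le_sum fun i hi => by gcongr; exacts [ha i, h i hi]
    _ ≤ ∑ i, η i * a i := Finset.sum_le_sum_of_subset_of_nonneg (Finset.subset_univ s)
        fun i _ _ => mul_nonneg (hη i) (ha i)

section Modes

variable {K m : ℕ} {G : SimpleGraph (Fin K)} {mu lam : Fin K → ℝ} {kstar : Fin K}

lemma isMode_of_forall_lt {j : Fin K} (h : ∀ i, i ≠ j → lam i < lam j) : IsMode G lam j :=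
  fun _ hi => h _ hi.ne.symm

lemma exists_notMem_modeNeighborhood (hN : (ModeNeighborhood G mu).ncard < K) :
    ∃ j, j ∉ ModeNeighborhood G mu := by
  by_contra! h
  rw [eq_univ_of_forall h, ncard_univ, Nat.card_eq_fintype_card, Fintype.card_fin] at hN
  exact hN.false

lemma setOf_isMode_update_subset {j₀ k l : Fin K} {c : ℝ} (hk : IsMode G mu k)
    (hkl : G.Adj k l) (hl : ∀ i, G.Adj k i → mu i ≤ mu l) (hj₀k : j₀ ≠ k) (hc : ∀ i, mu i < c) :
    {i | IsMode G (update (update mu k (mu l)) j₀ c) i} ⊆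
      insert j₀ ({i | IsMode G mu i} \ {k}) := by
  set lam := update (update mu k (mu l)) j₀ c
  have hlamk : lam k = mu l := by simp [lam, hj₀k.symm]
  have hge : ∀ i, i ≠ k → mu i ≤ lam i := by
    intro i hik
    rcases eq_or_ne i j₀ with rfl | hij₀
    · simpa [lam] using (hc i).le
    · simp [lam, hij₀, hik]
  intro i hi
  rcases eq_or_ne i j₀ with rfl | hij₀
  · exact mem_insert _ _
  have hik : i ≠ k := by
    rintro rfl
    linarith [hi l hkl, hge l hkl.ne.symm]
  have hlami : lam i = mu i := by simp [lam, hij₀, hik]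
  refine mem_insert_of_mem _ ⟨fun b hib => ?_, hik⟩
  have hlt : lam b < lam i := hi b hib
  rcases eq_or_ne b k with rfl | hbk
  · linarith [hl i hib.symm]
  · linarith [hge b hbk]

lemma update_mem_confusingSet {j₀ k l : Fin K} (hmodes : {i | IsMode G mu i}.ncard ≤ m)
    (hkstar : ∀ j, j ≠ kstar → mu j < mu kstar) (hk : IsMode G mu k) (hkl : G.Adj k l)
    (hl : ∀ i, G.Adj k i → mu i ≤ mu l) (hj₀k : j₀ ≠ k) (hkstarj₀ : kstar ≠ j₀)
    (hkstark : kstar ≠ k) :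
    update (update mu k (mu l)) j₀ (mu kstar + 1) ∈ ConfusingSet G m mu kstar := by
  have hmax : ∀ i, mu i ≤ mu kstar := fun i => by
    rcases eq_or_ne i kstar with rfl | hi
    exacts [le_rfl, (hkstar i hi).le]
  refine ⟨?_, by simp [hkstarj₀, hkstark], j₀, hkstarj₀.symm, fun i hi => ?_⟩
  · calc _ ≤ (insert j₀ ({i | IsMode G mu i} \ {k})).ncard :=
          ncard_le_ncard (setOf_isMode_update_subset hk hkl hl hj₀k
            fun i => (hmax i).trans_lt (lt_add_one _))
      _ ≤ ({i | IsMode G mu i} \ {k}).ncard + 1 := ncard_insert_le _ _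
      _ = {i | IsMode G mu i}.ncard := by
          rw [ncard_sdiff_singleton_of_mem hk, Nat.sub_add_cancel ((ncard_pos).2 ⟨k, hk⟩)]
      _ ≤ m := hmodes
  · rw [update_self, update_of_ne hi]
    rcases eq_or_ne i k with rfl | hik
    · simpa using (hmax l).trans_lt (lt_add_one _)
    · simpa [hik] using (hmax i).trans_lt (lt_add_one _)

lemma sum_mul_update_eq {d : Fin K → ℝ → ℝ → ℝ} {η : Fin K → ℝ} {j₀ k : Fin K} {a c : ℝ}
    (hdzero : ∀ j x, d j x x = 0) (hη : η j₀ = 0) (hj₀k : j₀ ≠ k) :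
    ∑ j, η j * d j (mu j) (update (update mu k a) j₀ c j) = η k * d k (mu k) a := by
  rw [Finset.sum_eq_single k]
  · simp [hj₀k.symm]
  · intro j _ hjk
    rcases eq_or_ne j j₀ with rfl | hj
    · simp [hη]
    · simp [hj, hjk, hdzero]
  · simp

lemma one_div_le_of_isFeasibleLocalStrategy {d : Fin K → ℝ → ℝ → ℝ} {η : Fin K → ℝ}
    {j₀ k l : Fin K} (hη : IsFeasibleLocalStrategy G m mu kstar d η)
    (hmodes : {i | IsMode G mu i}.ncard ≤ m) (hkstar : ∀ j, j ≠ kstar → mu j < mu kstar)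
    (hdzero : ∀ j x, d j x x = 0) (hj₀ : j₀ ∉ ModeNeighborhood G mu) (hk : IsMode G mu k)
    (hkstark : kstar ≠ k) (hkl : G.Adj k l) (hl : ∀ i, G.Adj k i → mu i ≤ mu l) :
    1 / d k (mu k) (mu l) ≤ η k := by
  have hj₀k : j₀ ≠ k := by rintro rfl; exact hj₀ (Or.inl hk)
  have hkstarj₀ : kstar ≠ j₀ := by
    rintro rfl; exact hj₀ (Or.inl (isMode_of_forall_lt hkstar))
  have h := hη.2.1 _ (update_mem_confusingSet hmodes hkstar hk hkl hl hj₀k hkstarj₀ hkstark)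
  rw [sum_mul_update_eq hdzero (hη.2.2 j₀ hj₀) hj₀k] at h
  have hd : 0 < d k (mu k) (mu l) := by
    by_contra! hd
    nlinarith [hη.1 k]
  rw [div_le_iff₀ hd]
  linarith

lemma exists_pos_le_mode_gaps (hkstar : ∀ j, j ≠ kstar → mu j < mu kstar) :
    ∃ ρ > 0, (∀ a b, IsMode G mu a → G.Adj a b → 2 * ρ ≤ mu a - mu b) ∧
      ∀ j, j ≠ kstar → ρ ≤ mu kstar - mu j := by
  have hgap : ∀ p : Fin K × Fin K, ∀ᶠ ρ in nhds (0 : ℝ),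
      IsMode G mu p.1 → G.Adj p.1 p.2 → 2 * ρ ≤ mu p.1 - mu p.2 := by
    intro p
    by_cases hp : IsMode G mu p.1 ∧ G.Adj p.1 p.2
    · filter_upwards [eventually_lt_nhds (half_pos (sub_pos.2 (hp.1 _ hp.2)))] with ρ hρ _ _
      linarith
    · exact .of_forall fun _ h₁ h₂ => (hp ⟨h₁, h₂⟩).elim
  have hstar : ∀ j : Fin K, ∀ᶠ ρ in nhds (0 : ℝ), j ≠ kstar → ρ ≤ mu kstar - mu j := by
    intro j
    by_cases hj : j = kstar
    · exact .of_forall fun _ h => (h hj).elim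
    · filter_upwards [eventually_lt_nhds (sub_pos.2 (hkstar j hj))] with ρ hρ _ using hρ.le
  obtain ⟨ρ, hρ, hgap, hstar⟩ :=
    ((Filter.eventually_all.2 hgap).and (Filter.eventually_all.2 hstar)).exists_gt
  exact ⟨ρ, hρ, fun a b => hgap (a, b), hstar⟩

lemma setOf_isMode_subset_of_abs_sub_lt {ρ : ℝ}
    (hgap : ∀ a b, IsMode G mu a → G.Adj a b → 2 * ρ ≤ mu a - mu b)
    (hclose : ∀ j ∈ ModeNeighborhood G mu, |lam j - mu j| < ρ) :
    {i | IsMode G mu i} ⊆ {i | IsMode G lam i} := by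
  intro a ha b hab
  have ha' := abs_lt.mp (hclose a (Or.inl ha))
  have hb' := abs_lt.mp (hclose b (Or.inr ⟨a, ha, hab⟩))
  linarith [hgap a b ha hab]

lemma exists_le_abs_sub_of_mem_confusingSet {ρ : ℝ} (hmodes : {i | IsMode G mu i}.ncard = m)
    (hgap : ∀ a b, IsMode G mu a → G.Adj a b → 2 * ρ ≤ mu a - mu b)
    (hstar : ∀ j, j ≠ kstar → ρ ≤ mu kstar - mu j) (hlam : lam ∈ ConfusingSet G m mu kstar) :
    ∃ j ∈ ModeNeighborhood G mu, ρ ≤ |lam j - mu j| := by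
  by_contra! hclose
  obtain ⟨hmodal, hlamkstar, jmax, hjmax, hlt⟩ := hlam
  have hjmaxN : jmax ∉ ModeNeighborhood G mu := fun hN => by
    have := abs_lt.mp (hclose jmax hN)
    linarith [hlt kstar hjmax.symm, hstar jmax hjmax]
  have hsub : insert jmax {i | IsMode G mu i} ⊆ {i | IsMode G lam i} :=
    insert_subset (isMode_of_forall_lt hlt) (setOf_isMode_subset_of_abs_sub_lt hgap hclose)
  have := (ncard_le_ncard hsub).trans hmodal
  rw [ncard_insert_of_notMem fun h => hjmaxN (Or.inl h), hmodes] at this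
  omega

lemma exists_isFeasibleLocalStrategy {d : Fin K → ℝ → ℝ → ℝ}
    (hmodes : {i | IsMode G mu i}.ncard = m) (hkstar : ∀ j, j ≠ kstar → mu j < mu kstar)
    (hd0 : ∀ j x y, 0 ≤ d j x y) (hdzero : ∀ j x, d j x x = 0)
    (hdanti : ∀ j x, StrictAntiOn (d j x) (Iic x)) (hdmono : ∀ j x, StrictMonoOn (d j x) (Ici x)) :
    ∃ η, IsFeasibleLocalStrategy G m mu kstar d η := by
  classical
  obtain ⟨ρ, hρ, hgap, hstar⟩ := exists_pos_le_mode_gaps (G := G) hkstar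
  set w : Fin K → ℝ := fun j => min (d j (mu j) (mu j - ρ)) (d j (mu j) (mu j + ρ))
  have hw : ∀ j, 0 < w j := fun j =>
    lt_min (pos_of_strictAntiOn_strictMonoOn (hdzero _ _) (hdanti _ _) (hdmono _ _) (by linarith))
      (pos_of_strictAntiOn_strictMonoOn (hdzero _ _) (hdanti _ _) (hdmono _ _) (by linarith))
  set η : Fin K → ℝ := fun j => if j ∈ ModeNeighborhood G mu then 1 / w j else 0
  have hη : ∀ j, 0 ≤ η j := fun j => by
    simp only [η]; split_ifs
    exacts [(one_div_pos.2 (hw j)).le, le_rfl]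
  refine ⟨η, hη, fun lam hlam => ?_, fun j hj => if_neg hj⟩
  obtain ⟨j, hjN, hj⟩ := exists_le_abs_sub_of_mem_confusingSet hmodes hgap hstar hlam
  calc (1 : ℝ) = 1 / w j * w j := (one_div_mul_cancel (hw j).ne').symm
    _ ≤ η j * d j (mu j) (lam j) := by
        simp only [η, if_pos hjN]
        exact mul_le_mul_of_nonneg_left (min_le_of_le_abs_sub (hdanti _ _) (hdmono _ _) hρ.le hj)
          (one_div_pos.2 (hw j)).le
    _ ≤ ∑ i, η i * d i (mu i) (lam i) :=
        Finset.single_le_sum (fun i _ => mul_nonneg (hη i) (hd0 i (mu i) (lam i))) (Finset.mem_univ j)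

end Modes

open Classical in
theorem local_search_lower_bound_general {K m : ℕ} (G : SimpleGraph (Fin K))
    (mu : Fin K → ℝ) (kstar : Fin K)
    (hmodes : {j | IsMode G mu j}.ncard = m)
    (hkstar : ∀ j, j ≠ kstar → mu j < mu kstar)
    (hN : (ModeNeighborhood G mu).ncard < K)
    (Δ : Fin K → ℝ) (hΔ : ∀ k, Δ k = mu kstar - mu k)
    (δ : Fin K → ℝ)
    (hδmin : ∀ k, IsMode G mu k → ∃ l, G.Adj k l ∧ δ k = |mu k - mu l|)
    (hδle : ∀ k, IsMode G mu k → ∀ l, G.Adj k l → δ k ≤ |mu k - mu l|)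
    (d : Fin K → ℝ → ℝ → ℝ)
    (hd0 : ∀ j x y, 0 ≤ d j x y)
    (hdzero : ∀ j (x : ℝ), d j x x = 0)
    (hdanti : ∀ j (x : ℝ), StrictAntiOn (d j x) (Set.Iic x))
    (hdmono : ∀ j (x : ℝ), StrictMonoOn (d j x) (Set.Ici x)) :
    (∀ η : Fin K → ℝ, (∀ j, 0 ≤ η j) →
      (∀ lam ∈ ConfusingSet G m mu kstar, 1 ≤ ∑ j, η j * d j (mu j) (lam j)) →
      (∀ j, j ∉ ModeNeighborhood G mu → η j = 0) →
      ∀ k, IsMode G mu k → k ≠ kstar →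
        1 / d k (mu k) (mu k - δ k) ≤ η k) ∧
    (∑ k ∈ Finset.univ.filter (fun k => IsMode G mu k ∧ k ≠ kstar),
        Δ k / d k (mu k) (mu k - δ k)) ≤
      sInf {x : ℝ | ∃ η : Fin K → ℝ, (∀ j, 0 ≤ η j) ∧
        (∀ lam ∈ ConfusingSet G m mu kstar, 1 ≤ ∑ j, η j * d j (mu j) (lam j)) ∧
        (∀ j, j ∉ ModeNeighborhood G mu → η j = 0) ∧
        x = ∑ j, η j * Δ j} := by
  obtain ⟨j₀, hj₀⟩ := exists_notMem_modeNeighborhood hN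
  have hbound : ∀ η, IsFeasibleLocalStrategy G m mu kstar d η →
      ∀ k, IsMode G mu k → k ≠ kstar → 1 / d k (mu k) (mu k - δ k) ≤ η k := by
    intro η hη k hk hkstark
    obtain ⟨l, hkl, hδl⟩ := hδmin k hk
    rw [show mu k - δ k = mu l by rw [hδl, abs_of_pos (sub_pos.2 (hk l hkl))]; ring]
    refine one_div_le_of_isFeasibleLocalStrategy hη hmodes.le hkstar hdzero hj₀ hk
      (Ne.symm hkstark) hkl fun i hki => ?_
    have := hδle k hk i hki
    rw [hδl, abs_of_pos (sub_pos.2 (hk l hkl)), abs_of_pos (sub_pos.2 (hk i hki))] at this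
    linarith
  refine ⟨fun η h0 hfeas hloc => hbound η ⟨h0, hfeas, hloc⟩, ?_⟩
  obtain ⟨η₀, hη₀⟩ := exists_isFeasibleLocalStrategy hmodes hkstar hd0 hdzero hdanti hdmono
  refine le_csInf ⟨_, η₀, hη₀.1, hη₀.2.1, hη₀.2.2, rfl⟩ ?_
  rintro _ ⟨η, h0, hfeas, hloc, rfl⟩
  refine sum_div_le_sum_mul_of_one_div_le _ (fun j => ?_) h0 fun k hk => ?_
  · rcases eq_or_ne j kstar with rfl | hj
    · simp [hΔ]
    · linarith [hΔ j, hkstar j hj]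
  · rw [Finset.mem_filter] at hk
    exact hbound η ⟨h0, hfeas, hloc⟩ k hk.2.1 hk.2.2

open Classical in
/-- Suboptimality of local search: any feasible local search strategy must satisfy
`η_k ≥ 1/d_k(μ_k, μ_k - δ_k)` at each suboptimal mode `k`, hence
`C_loc(m,μ) ≥ Σ_{k ∈ M(μ)\{k*}} Δ_k / d_k(μ_k, μ_k - δ_k)`. -/
theorem local_search_lower_bound {K m : ℕ} (hm : 1 < m) (G : SimpleGraph (Fin K))
    (hG : G.IsTree)
    (mu : Fin K → ℝ) (kstar : Fin K)
    (hmodes : {j | IsMode G mu j}.ncard = m)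
    (hkstar : ∀ j, j ≠ kstar → mu j < mu kstar)
    (hN : (ModeNeighborhood G mu).ncard < K)
    (Δ : Fin K → ℝ) (hΔ : ∀ k, Δ k = mu kstar - mu k)
    (δ : Fin K → ℝ)
    (hδmin : ∀ k, IsMode G mu k → ∃ l, G.Adj k l ∧ δ k = |mu k - mu l|)
    (hδle : ∀ k, IsMode G mu k → ∀ l, G.Adj k l → δ k ≤ |mu k - mu l|)
    (d : Fin K → ℝ → ℝ → ℝ)
    (hd0 : ∀ j x y, 0 ≤ d j x y)
    (hdcont : ∀ j (x : ℝ), Continuous (d j x))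
    (hdzero : ∀ j (x : ℝ), d j x x = 0)
    (hdanti : ∀ j (x : ℝ), StrictAntiOn (d j x) (Set.Iic x))
    (hdmono : ∀ j (x : ℝ), StrictMonoOn (d j x) (Set.Ici x)) :
    (∀ η : Fin K → ℝ, (∀ j, 0 ≤ η j) →
      (∀ lam ∈ ConfusingSet G m mu kstar, 1 ≤ ∑ j, η j * d j (mu j) (lam j)) →
      (∀ j, j ∉ ModeNeighborhood G mu → η j = 0) →
      ∀ k, IsMode G mu k → k ≠ kstar →
        1 / d k (mu k) (mu k - δ k) ≤ η k) ∧
    (∑ k ∈ Finset.univ.filter (fun k => IsMode G mu k ∧ k ≠ kstar),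
        Δ k / d k (mu k) (mu k - δ k)) ≤
      sInf {x : ℝ | ∃ η : Fin K → ℝ, (∀ j, 0 ≤ η j) ∧
        (∀ lam ∈ ConfusingSet G m mu kstar, 1 ≤ ∑ j, η j * d j (mu j) (lam j)) ∧
        (∀ j, j ∉ ModeNeighborhood G mu → η j = 0) ∧
        x = ∑ j, η j * Δ j} :=
  local_search_lower_bound_general G mu kstar hmodes hkstar hN Δ hΔ δ hδmin hδle d hd0 hdzero hdanti
    hdmono
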